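/- (Theorem 2, part (ii)) Every complex eigenvalue λ of M with λ ≠ 0 and λ³ ≠ −1 (equivalently λ ∉ {−1, (1+√3 i)/2, (1−√3 i)/2}) is also an eigenvalue of the 2nd-order non-backtracking matrix B^(2) of G. -/

import Mathlib

open Matrix ENNReal

namespace PercNB

variable {V : Type*} [Fintype V] [DecidableEq V]

/-- `p : Fin (g+1) → V` is a length-`g` directed path in the simple graph `G`:
`g+1` pairwise distinct vertices with consecutive vertices adjacent. -/
def IsDiPath (G : SimpleGraph V) (g : ℕ) (p : Fin (g+1) → V) : Prop :=
  Function.Injective p ∧ ∀ k : Fin g, G.Adj (p k.castSucc) (p k.succ)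

instance (G : SimpleGraph V) [DecidableRel G.Adj] (g : ℕ) :
    DecidablePred (IsDiPath G g) := fun p =>
  inferInstanceAs (Decidable (Function.Injective p ∧ ∀ k : Fin g, G.Adj (p k.castSucc) (p k.succ)))

/-- The type of length-`g` directed paths of `G`. -/
abbrev DiPath (G : SimpleGraph V) (g : ℕ) := {p : Fin (g+1) → V // IsDiPath G g p}

/-- The `g`-th-order non-backtracking matrix `B^(g)` of `G`, indexed by the length-`g`
directed paths of `G`: the `(p, q)` entry is `1` if `q k = p (k+1)` for `1 ≤ k ≤ g` and
`(p 1, …, p (g+1), q (g+1))` is a length-`(g+1)` directed path, and `0` otherwise. -/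
def NBM (G : SimpleGraph V) [DecidableRel G.Adj] (g : ℕ) :
    Matrix (DiPath G g) (DiPath G g) ℂ := fun p q =>
  if (∀ k : Fin g, q.1 k.castSucc = p.1 k.succ) ∧
      IsDiPath G (g+1) (Fin.snoc p.1 (q.1 (Fin.last g))) then 1 else 0

/-- The spectral radius of a finite square complex matrix:
the maximum modulus of its eigenvalues (`0` if the index type is empty). -/
noncomputable def specRad {n : Type*} [Fintype n] [DecidableEq n] (X : Matrix n n ℂ) : ℝ≥0∞ :=
  spectralRadius ℂ X

/-- `c : Fin k → V` is a simple cycle of length `k ≥ 3` in `G`: pairwise distinct vertices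
with `c t` adjacent to `c (t+1)` for `1 ≤ t ≤ k-1` and `c k` adjacent to `c 1`. -/
def IsSimpleCycle (G : SimpleGraph V) (k : ℕ) (c : Fin k → V) : Prop :=
  3 ≤ k ∧ Function.Injective c ∧
    ∀ t : Fin k, G.Adj (c t) (c ⟨(t.val + 1) % k, Nat.mod_lt _ t.pos⟩)

/-- The arc relation of the digraph `G^(g)` on the length-`g` directed paths of `G`:
`p → q` exactly when `B^(g)_{p,q} = 1`. -/
def NBArc (G : SimpleGraph V) (g : ℕ) (p q : DiPath G g) : Prop :=
  (∀ k : Fin g, q.1 k.castSucc = p.1 k.succ) ∧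
    IsDiPath G (g+1) (Fin.snoc p.1 (q.1 (Fin.last g)))

/-- The arc relation of the line digraph `L(G^(g-1))` (for `g ≥ 1`), under the identification
of its vertices — the arcs `(i₁,…,i_g) → (i₂,…,i_{g+1})` of `G^(g-1)` — with the length-`g`
directed paths `(i₁,…,i_{g+1})` of `G`: there is an arc `p → q` exactly when the arc
corresponding to `p` ends at the tail of the arc corresponding to `q`, i.e. when
`q k = p (k+1)` for `1 ≤ k ≤ g`. -/
def LineArc (G : SimpleGraph V) (g : ℕ) (p q : DiPath G g) : Prop :=
  ∀ k : Fin g, q.1 k.castSucc = p.1 k.succ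

/-- `c : Fin k → α` is a directed cycle of length `k` with respect to the arc relation `r`:
`k` pairwise distinct vertices with an arc from each to the cyclically next one. -/
def IsDiCycle {α : Type*} (r : α → α → Prop) (k : ℕ) (c : Fin k → α) : Prop :=
  Function.Injective c ∧ ∀ t : Fin k, r (c t) (c ⟨(t.val + 1) % k, Nat.mod_lt _ t.pos⟩)

/-- The type of directed edges of `G`: ordered pairs of adjacent vertices. -/
abbrev DiEdge (G : SimpleGraph V) := {e : V × V // G.Adj e.1 e.2}

/-- The standard non-backtracking matrix `B = B^(1)`, indexed by directed edges:
`B_{(i,j),(k,l)} = 1` iff `j = k`, `l ≠ i` and `j` is adjacent to `l`. -/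
def Bmat (G : SimpleGraph V) [DecidableRel G.Adj] : Matrix (DiEdge G) (DiEdge G) ℂ :=
  fun e f => if e.1.2 = f.1.1 ∧ f.1.2 ≠ e.1.1 ∧ G.Adj e.1.2 f.1.2 then 1 else 0

/-- `(ΔB₁)_{(i,j),(k,l)} = 1` iff `B_{(i,j),(k,l)} = 1` and `i` is adjacent to `l`. -/
def dB1 (G : SimpleGraph V) [DecidableRel G.Adj] : Matrix (DiEdge G) (DiEdge G) ℂ :=
  fun e f => if (e.1.2 = f.1.1 ∧ f.1.2 ≠ e.1.1 ∧ G.Adj e.1.2 f.1.2) ∧ G.Adj e.1.1 f.1.2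
    then 1 else 0

/-- `(ΔB₂)_{(i,j),(k,l)} = 1` iff `l = i` and `j` is adjacent to `k`. -/
def dB2 (G : SimpleGraph V) [DecidableRel G.Adj] : Matrix (DiEdge G) (DiEdge G) ℂ :=
  fun e f => if f.1.2 = e.1.1 ∧ G.Adj e.1.2 f.1.1 then 1 else 0

/-- The diagonal matrix `D_Δ` whose `((i,j),(i,j))` entry is the number of common
neighbours of `i` and `j`. -/
noncomputable def Ddel (G : SimpleGraph V) [DecidableRel G.Adj] :
    Matrix (DiEdge G) (DiEdge G) ℂ :=
  Matrix.diagonal fun e =>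
    ((Finset.univ.filter fun v => G.Adj e.1.1 v ∧ G.Adj e.1.2 v).card : ℂ)

/-- The `8E × 8E` block matrix
`M = [[B, −ΔB₂, D_Δ − I, B − ΔB₁], [I, 0, 0, 0], [0, I, 0, 0], [0, 0, I, 0]]`. -/
noncomputable def Mmat (G : SimpleGraph V) [DecidableRel G.Adj] :
    Matrix ((DiEdge G ⊕ DiEdge G) ⊕ (DiEdge G ⊕ DiEdge G))
      ((DiEdge G ⊕ DiEdge G) ⊕ (DiEdge G ⊕ DiEdge G)) ℂ :=
  Matrix.fromBlocks
    (Matrix.fromBlocks (Bmat G) (-(dB2 G)) 1 0)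
    (Matrix.fromBlocks (Ddel G - 1) (Bmat G - dB1 G) 0 0)
    (Matrix.fromBlocks 0 1 0 0)
    (Matrix.fromBlocks 0 0 1 0)

/-- `x_{(i,j)} = Σ_k ψ_{(i,j,k)}`, the sum over all vertices `k` adjacent to `j` with
`k ≠ i`; equivalently, the sum of `ψ` over all length-2 directed paths starting `(i,j,·)`. -/
noncomputable def xvec (G : SimpleGraph V) [DecidableRel G.Adj] (ψ : DiPath G 2 → ℂ) :
    DiEdge G → ℂ := fun e =>
  ∑ p ∈ Finset.univ.filter (fun p : DiPath G 2 => p.1 0 = e.1.1 ∧ p.1 1 = e.1.2), ψ p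

/-- `y_{(i,j)} = Σ_k ψ_{(i,j,k)}`, the sum over all vertices `k` adjacent to both `i`
and `j`. -/
noncomputable def yvec (G : SimpleGraph V) [DecidableRel G.Adj] (ψ : DiPath G 2 → ℂ) :
    DiEdge G → ℂ := fun e =>
  ∑ p ∈ Finset.univ.filter
    (fun p : DiPath G 2 => p.1 0 = e.1.1 ∧ p.1 1 = e.1.2 ∧ G.Adj e.1.1 (p.1 2)), ψ p

/-- The block vector `z = (x, λ⁻¹x, λ⁻²x, λ⁻³x)`. -/
noncomputable def blockVec {G : SimpleGraph V} (lam : ℂ) (x : DiEdge G → ℂ) :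
    (DiEdge G ⊕ DiEdge G) ⊕ (DiEdge G ⊕ DiEdge G) → ℂ :=
  Sum.elim (Sum.elim x (lam⁻¹ • x)) (Sum.elim ((lam ^ 2)⁻¹ • x) ((lam ^ 3)⁻¹ • x))

/-- The vector `ψ` built from `x`:
`ψ_{(i,j,k)} = (λ²x_{(j,k)} − λx_{(k,i)} + x_{(i,j)})/(λ³+1)` if `i` and `k` are adjacent,
and `ψ_{(i,j,k)} = λ⁻¹ x_{(j,k)}` if `i` and `k` are not adjacent. -/
noncomputable def psiOf (G : SimpleGraph V) [DecidableRel G.Adj] (lam : ℂ)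
    (x : DiEdge G → ℂ) : DiPath G 2 → ℂ := fun p =>
  if h : G.Adj (p.1 0) (p.1 2) then
    (lam ^ 2 * x ⟨(p.1 1, p.1 2), by simpa using p.2.2 1⟩
      - lam * x ⟨(p.1 2, p.1 0), h.symm⟩
      + x ⟨(p.1 0, p.1 1), by simpa using p.2.2 0⟩) / (lam ^ 3 + 1)
  else lam⁻¹ * x ⟨(p.1 1, p.1 2), by simpa using p.2.2 1⟩

end PercNB

/-!
For `λ ≠ 0` the identity blocks of `M` force an eigenvector to have the shape
`(x, λ⁻¹x, λ⁻²x, λ⁻³x)`, and its first block row becomes the quartic equation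
`λ⁴x = λ³Bx − λ²ΔB₂x + λ(D_Δ − I)x + (B − ΔB₁)x`.
When `λ³ ≠ −1` this equation gives `Σ_k ψ_{(i,j,k)} = x_{(i,j)}` for `ψ = psiOf λ x`, and that
identity alone makes `ψ` an eigenvector of `B^(2)`:
`(B^(2)ψ)_{(i,j,k)} = x_{(j,k)} − [i ∼ k] ψ_{(j,k,i)} = λ ψ_{(i,j,k)}`.
Finally `ψ ≠ 0` because `x` is recovered from it.
-/

theorem Matrix.mem_spectrum_iff_exists_mulVec_eq_smul {K n : Type*} [Field K] [Fintype n]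
    [DecidableEq n] (A : Matrix n n K) (μ : K) :
    μ ∈ spectrum K A ↔ ∃ v ≠ 0, A *ᵥ v = μ • v := by
  rw [← Matrix.spectrum_toLin', ← Module.End.hasEigenvalue_iff_mem_spectrum]
  constructor
  · intro h
    obtain ⟨v, hv⟩ := h.exists_hasEigenvector
    exact ⟨v, hv.2, by simpa using hv.1⟩
  · rintro ⟨v, hv0, hv⟩
    exact Module.End.hasEigenvalue_of_hasEigenvector
      ⟨Module.End.mem_eigenspace_iff.2 (by simpa using hv), hv0⟩

namespace PercNB

open Finset

section

variable {V : Type*} {G : SimpleGraph V}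

theorem isDiPath_snoc_iff {g : ℕ} {p : Fin (g + 1) → V} (hp : IsDiPath G g p) (v : V) :
    IsDiPath G (g + 1) (Fin.snoc p v) ↔ G.Adj (p (Fin.last g)) v ∧ v ∉ Set.range p := by
  unfold IsDiPath
  rw [Fin.snoc_injective_iff, Fin.forall_fin_succ']
  simp only [Fin.succ_castSucc, Fin.snoc_castSucc]
  simp [hp.1, hp.2, and_comm]

theorem isDiPath_two_iff {i j k : V} :
    IsDiPath G 2 ![i, j, k] ↔ G.Adj i j ∧ G.Adj j k ∧ k ≠ i := by
  constructor
  · rintro ⟨hinj, hadj⟩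
    exact ⟨by simpa using hadj 0, by simpa using hadj 1,
      fun h => absurd (hinj (a₁ := 2) (a₂ := 0) (by simpa using h)) (by decide)⟩
  · rintro ⟨hij, hjk, hki⟩
    refine ⟨?_, fun t => by fin_cases t <;> simpa⟩
    intro a b hab
    fin_cases a <;> fin_cases b <;> simp_all [hij.ne, hjk.ne, hij.ne', hjk.ne']

theorem DiPath.eq_vecCons (p : DiPath G 2) : p.1 = ![p.1 0, p.1 1, p.1 2] := by
  funext t; fin_cases t <;> rfl

theorem DiPath.adj_adj_ne (p : DiPath G 2) :
    G.Adj (p.1 0) (p.1 1) ∧ G.Adj (p.1 1) (p.1 2) ∧ p.1 2 ≠ p.1 0 :=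
  isDiPath_two_iff.1 (p.eq_vecCons ▸ p.2)

theorem nbArc_two_iff (p q : DiPath G 2) :
    NBArc G 2 p q ↔ q.1 0 = p.1 1 ∧ q.1 1 = p.1 2 ∧ q.1 2 ≠ p.1 0 := by
  obtain ⟨-, hq12, hq20⟩ := q.adj_adj_ne
  rw [NBArc, isDiPath_snoc_iff p.2, Fin.forall_fin_two]
  simp only [Fin.castSucc_zero, Fin.succ_zero_eq_one, Fin.castSucc_one, Fin.succ_one_eq_two]
  constructor
  · rintro ⟨⟨h0, h1⟩, -, hrange⟩
    exact ⟨h0, h1, fun h => hrange ⟨0, h.symm⟩⟩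
  · rintro ⟨h0, h1, h2⟩
    refine ⟨⟨h0, h1⟩, h1 ▸ hq12, ?_⟩
    rintro ⟨t, ht⟩
    fin_cases t
    · exact h2 ht.symm
    · exact hq20 (ht.symm.trans h0.symm)
    · exact hq12.ne (h1.trans ht)

variable [DecidableRel G.Adj]

/-- Extending by zero lets the sums below range over vertices instead of adjacency proofs. -/
def extendByZero (x : DiEdge G → ℂ) (a b : V) : ℂ :=
  if h : G.Adj a b then x ⟨(a, b), h⟩ else 0

theorem extendByZero_of_adj {x : DiEdge G → ℂ} {a b : V} (h : G.Adj a b) :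
    extendByZero x a b = x ⟨(a, b), h⟩ :=
  dif_pos h

noncomputable def psiFun (lam : ℂ) (x : DiEdge G → ℂ) (i j k : V) : ℂ :=
  if G.Adj i k then
    (lam ^ 2 * extendByZero x j k - lam * extendByZero x k i + extendByZero x i j) / (lam ^ 3 + 1)
  else lam⁻¹ * extendByZero x j k

theorem psiOf_apply (lam : ℂ) (x : DiEdge G → ℂ) (p : DiPath G 2) :
    psiOf G lam x p = psiFun lam x (p.1 0) (p.1 1) (p.1 2) := by
  obtain ⟨h01, h12, -⟩ := p.adj_adj_ne
  unfold psiOf psiFun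
  split_ifs with h02
  · simp only [extendByZero_of_adj h01, extendByZero_of_adj h12, extendByZero_of_adj h02.symm]
  · simp only [extendByZero_of_adj h12]

variable [Fintype V]

theorem sum_diEdge (F : DiEdge G → ℂ) :
    ∑ e, F e = ∑ a, ∑ b, if h : G.Adj a b then F ⟨(a, b), h⟩ else 0 := by
  let F' (e : V × V) : ℂ := if h : G.Adj e.1 e.2 then F ⟨e, h⟩ else 0
  calc ∑ e, F e = ∑ e : DiEdge G, F' e := sum_congr rfl fun e _ => by simp [F', e.2]
    _ = ∑ e ∈ univ.filter fun e : V × V => G.Adj e.1 e.2, F' e :=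
      (sum_subtype _ (by simp) F').symm
    _ = ∑ e, F' e := sum_filter_of_ne fun e _ h => by_contra fun he => h (dif_neg he)
    _ = _ := Fintype.sum_prod_type F'

variable [DecidableEq V]

theorem Bmat_mulVec_apply (x : DiEdge G → ℂ) {i j : V} (hij : G.Adj i j) :
    (Bmat G *ᵥ x) ⟨(i, j), hij⟩ =
      ∑ k ∈ univ.filter (fun k => G.Adj j k ∧ k ≠ i), extendByZero x j k := by
  rw [mulVec, dotProduct, sum_diEdge, sum_eq_single j]
  · simp +contextual [Bmat, ← extendByZero_of_adj, sum_filter, ite_and]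
  · intro a _ ha
    simp [Bmat, Ne.symm ha]
  · simp

theorem dB1_mulVec_apply (x : DiEdge G → ℂ) {i j : V} (hij : G.Adj i j) :
    (dB1 G *ᵥ x) ⟨(i, j), hij⟩ =
      ∑ k ∈ univ.filter (fun k => G.Adj i k ∧ G.Adj j k), extendByZero x j k := by
  rw [mulVec, dotProduct, sum_diEdge, sum_eq_single j]
  · simp +contextual [dB1, ← extendByZero_of_adj, sum_filter, ite_and]
    exact sum_congr rfl fun k _ => by split_ifs <;> simp_all
  · intro a _ ha
    simp [dB1, Ne.symm ha]
  · simp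

theorem dB2_mulVec_apply (x : DiEdge G → ℂ) {i j : V} (hij : G.Adj i j) :
    (dB2 G *ᵥ x) ⟨(i, j), hij⟩ =
      ∑ k ∈ univ.filter (fun k => G.Adj i k ∧ G.Adj j k), extendByZero x k i := by
  rw [mulVec, dotProduct, sum_diEdge, sum_filter]
  refine sum_congr rfl fun k _ => ?_
  rw [sum_eq_single i]
  · simp +contextual [dB2, ← extendByZero_of_adj, G.adj_comm, ite_and]
  · intro b _ hb
    simp [dB2, hb]
  · simp

theorem Ddel_mulVec_apply (x : DiEdge G → ℂ) {i j : V} (hij : G.Adj i j) :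
    (Ddel G *ᵥ x) ⟨(i, j), hij⟩ =
      #(univ.filter (fun k => G.Adj i k ∧ G.Adj j k)) * x ⟨(i, j), hij⟩ :=
  mulVec_diagonal _ _ _

theorem sum_diPath_two_fiber (f : V → ℂ) {i j : V} (hij : G.Adj i j) :
    ∑ p ∈ univ.filter (fun p : DiPath G 2 => p.1 0 = i ∧ p.1 1 = j), f (p.1 2) =
      ∑ k ∈ univ.filter (fun k => G.Adj j k ∧ k ≠ i), f k := by
  have mem_iff {k : V} : k ∈ univ.filter (fun k => G.Adj j k ∧ k ≠ i) ↔ G.Adj j k ∧ k ≠ i := by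
    simp
  refine sum_bij' (fun p _ => p.1 2)
    (fun k hk => ⟨![i, j, k], isDiPath_two_iff.2 ⟨hij, mem_iff.1 hk⟩⟩) ?_ ?_ ?_ ?_ ?_
  · rintro p hp
    obtain ⟨rfl, rfl⟩ := (mem_filter.1 hp).2
    exact mem_iff.2 p.adj_adj_ne.2
  · intro k _
    simp
  · rintro p hp
    obtain ⟨rfl, rfl⟩ := (mem_filter.1 hp).2
    exact Subtype.ext p.eq_vecCons.symm
  · intro k _
    rfl
  · intro p _
    rfl

theorem NBM_two_mulVec_apply (ψ : DiPath G 2 → ℂ) (p : DiPath G 2) :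
    (NBM G 2 *ᵥ ψ) p = ∑ q ∈ univ.filter (fun q : DiPath G 2 => q.1 0 = p.1 1 ∧ q.1 1 = p.1 2),
      if q.1 2 ≠ p.1 0 then ψ q else 0 := by
  rw [mulVec, dotProduct, sum_filter]
  refine sum_congr rfl fun q _ => ?_
  simp only [← ite_and, and_assoc]
  by_cases h : NBArc G 2 p q
  · rw [show NBM G 2 p q = 1 from if_pos h, if_pos ((nbArc_two_iff p q).1 h), one_mul]
  · rw [show NBM G 2 p q = 0 from if_neg h, if_neg (mt (nbArc_two_iff p q).2 h), zero_mul]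

theorem xvec_psiOf_apply (lam : ℂ) (x : DiEdge G → ℂ) {i j : V} (hij : G.Adj i j) :
    xvec G (psiOf G lam x) ⟨(i, j), hij⟩ =
      ∑ k ∈ univ.filter (fun k => G.Adj j k ∧ k ≠ i), psiFun lam x i j k := by
  rw [xvec, ← sum_diPath_two_fiber _ hij]
  refine sum_congr rfl fun p hp => ?_
  obtain ⟨h0, h1⟩ := (mem_filter.1 hp).2
  rw [psiOf_apply, h0, h1]

theorem Mmat_mulVec (a b c d : DiEdge G → ℂ) :
    Mmat G *ᵥ Sum.elim (Sum.elim a b) (Sum.elim c d) =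
      Sum.elim (Sum.elim (Bmat G *ᵥ a - dB2 G *ᵥ b + (Ddel G - 1) *ᵥ c + (Bmat G - dB1 G) *ᵥ d) a)
        (Sum.elim b c) := by
  funext t
  rcases t with (e | e) | (e | e) <;>
    simp [Mmat, fromBlocks_mulVec, neg_mulVec, sub_eq_add_neg, add_assoc]

theorem exists_eq_blockVec_of_Mmat_mulVec_eq_smul {lam : ℂ} (h0 : lam ≠ 0)
    {z : (DiEdge G ⊕ DiEdge G) ⊕ (DiEdge G ⊕ DiEdge G) → ℂ} (hz : Mmat G *ᵥ z = lam • z) :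
    ∃ x, z = blockVec lam x := by
  obtain ⟨a, b, c, d, rfl⟩ : ∃ a b c d, z = Sum.elim (Sum.elim a b) (Sum.elim c d) :=
    ⟨_, _, _, _, funext fun t => by rcases t with (e | e) | (e | e) <;> rfl⟩
  rw [Mmat_mulVec] at hz
  have ha : a = lam • b := funext fun e => by simpa using congrFun hz (.inl (.inr e))
  have hb : b = lam • c := funext fun e => by simpa using congrFun hz (.inr (.inl e))
  have hc : c = lam • d := funext fun e => by simpa using congrFun hz (.inr (.inr e))
  refine ⟨a, ?_⟩
  subst ha hb hc
  funext t
  rcases t with (e | e) | (e | e) <;> simp [blockVec] <;> field_simp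

theorem quartic_of_Mmat_mulVec_blockVec {lam : ℂ} (h0 : lam ≠ 0) {x : DiEdge G → ℂ}
    (hx : Mmat G *ᵥ blockVec lam x = lam • blockVec lam x) :
    lam ^ 4 • x = lam ^ 3 • (Bmat G *ᵥ x) - lam ^ 2 • (dB2 G *ᵥ x) +
      lam • ((Ddel G - 1) *ᵥ x) + (Bmat G - dB1 G) *ᵥ x := by
  funext e
  have he := congrFun hx (.inl (.inl e))
  simp only [blockVec, Mmat_mulVec, mulVec_smul, Sum.elim_inl, Pi.smul_apply, Pi.add_apply,
    Pi.sub_apply, smul_eq_mul] at he ⊢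
  field_simp at he
  linear_combination -he

theorem xvec_psiOf_eq_self {lam : ℂ} (h0 : lam ≠ 0) (h3 : lam ^ 3 + 1 ≠ 0) {x : DiEdge G → ℂ}
    (hx : lam ^ 4 • x = lam ^ 3 • (Bmat G *ᵥ x) - lam ^ 2 • (dB2 G *ᵥ x) +
      lam • ((Ddel G - 1) *ᵥ x) + (Bmat G - dB1 G) *ᵥ x) :
    xvec G (psiOf G lam x) = x := by
  funext ⟨⟨i, j⟩, hij⟩
  have hx := congrFun hx ⟨(i, j), hij⟩
  simp only [Pi.add_apply, Pi.sub_apply, Pi.smul_apply, smul_eq_mul, sub_mulVec, one_mulVec,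
    Bmat_mulVec_apply, dB1_mulVec_apply, dB2_mulVec_apply, Ddel_mulVec_apply] at hx
  set N := univ.filter (fun k => G.Adj j k ∧ k ≠ i)
  set T := univ.filter (fun k => G.Adj i k ∧ G.Adj j k)
  have hT : N.filter (fun k => G.Adj i k) = T := by
    ext k
    simp only [N, T, mem_filter, mem_univ, true_and]
    exact ⟨fun ⟨⟨hjk, _⟩, hik⟩ => ⟨hik, hjk⟩, fun ⟨hik, hjk⟩ => ⟨⟨hjk, hik.ne'⟩, hik⟩⟩
  have hB : ∑ k ∈ N, extendByZero x j k =
      ∑ k ∈ T, extendByZero x j k + ∑ k ∈ N.filter (fun k => ¬G.Adj i k), extendByZero x j k := by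
    rw [← hT, sum_filter_add_sum_filter_not]
  have hψ : ∑ k ∈ N, psiFun lam x i j k =
      ∑ k ∈ T, (lam ^ 2 * extendByZero x j k - lam * extendByZero x k i + extendByZero x i j) /
        (lam ^ 3 + 1) + ∑ k ∈ N.filter (fun k => ¬G.Adj i k), lam⁻¹ * extendByZero x j k := by
    rw [← sum_filter_add_sum_filter_not N (fun k => G.Adj i k), hT]
    congr 1
    · exact sum_congr rfl fun k hk => if_pos (mem_filter.1 hk).2.1
    · exact sum_congr rfl fun k hk => if_neg (mem_filter.1 hk).2
  rw [xvec_psiOf_apply, hψ, ← sum_div, ← mul_sum, sum_add_distrib, sum_sub_distrib, ← mul_sum,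
    ← mul_sum, sum_const, nsmul_eq_mul, extendByZero_of_adj hij]
  rw [hB] at hx
  field_simp
  linear_combination -hx

theorem NBM_two_mulVec_psiOf_apply (lam : ℂ) (x : DiEdge G → ℂ) (p : DiPath G 2) :
    (NBM G 2 *ᵥ psiOf G lam x) p =
      ∑ l ∈ univ.filter (fun l => G.Adj (p.1 2) l ∧ l ≠ p.1 1), psiFun lam x (p.1 1) (p.1 2) l -
        if G.Adj (p.1 0) (p.1 2) then psiFun lam x (p.1 1) (p.1 2) (p.1 0) else 0 := by
  obtain ⟨hij, hjk, -⟩ := p.adj_adj_ne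
  set i := p.1 0
  set j := p.1 1
  set k := p.1 2
  set N := univ.filter (fun l => G.Adj k l ∧ l ≠ j)
  have hi : i ∈ N ↔ G.Adj i k := by simp [N, G.adj_comm, hij.ne]
  have hfiber : (NBM G 2 *ᵥ psiOf G lam x) p =
      ∑ l ∈ N, if l ≠ i then psiFun lam x j k l else 0 := by
    rw [NBM_two_mulVec_apply, ← sum_diPath_two_fiber _ hjk]
    refine sum_congr rfl fun q hq => ?_
    obtain ⟨h0, h1⟩ := (mem_filter.1 hq).2
    rw [psiOf_apply, h0, h1]
  have hdrop (l : V) : (if l ≠ i then psiFun lam x j k l else 0) =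
      psiFun lam x j k l - if l = i then psiFun lam x j k l else 0 := by
    split_ifs <;> simp_all
  simp only [hfiber, hdrop, sum_sub_distrib, sum_ite_eq', hi]

theorem NBM_two_mulVec_psiOf {lam : ℂ} (h0 : lam ≠ 0) (h3 : lam ^ 3 + 1 ≠ 0)
    {x : DiEdge G → ℂ} (hx : xvec G (psiOf G lam x) = x) :
    NBM G 2 *ᵥ psiOf G lam x = lam • psiOf G lam x := by
  funext p
  obtain ⟨hij, hjk, -⟩ := p.adj_adj_ne
  rw [NBM_two_mulVec_psiOf_apply, ← xvec_psiOf_apply _ _ hjk, hx, Pi.smul_apply, smul_eq_mul,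
    psiOf_apply]
  unfold psiFun
  by_cases hik : G.Adj (p.1 0) (p.1 2)
  · rw [if_pos hik, if_pos hik, if_pos hij.symm, extendByZero_of_adj hjk]
    field_simp
    ring
  · rw [if_neg hik, if_neg hik, extendByZero_of_adj hjk, sub_zero]
    field_simp

end

variable {V : Type*} [Fintype V] [DecidableEq V]

/-- **Theorem 2, part (ii).** Every complex eigenvalue `λ` of `M` with `λ ≠ 0` and
`λ³ ≠ -1` is also an eigenvalue of the 2nd-order non-backtracking matrix `B^(2)` of `G`. -/
theorem mem_spectrum_nbm_of_mem_spectrum_M (G : SimpleGraph V) [DecidableRel G.Adj]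
    (lam : ℂ) (h0 : lam ≠ 0) (h3 : lam ^ 3 ≠ -1) (h : lam ∈ spectrum ℂ (Mmat G)) :
    lam ∈ spectrum ℂ (NBM G 2) := by
  have h3' : lam ^ 3 + 1 ≠ 0 := fun h => h3 (eq_neg_of_add_eq_zero_left h)
  obtain ⟨z, hz0, hz⟩ := (Matrix.mem_spectrum_iff_exists_mulVec_eq_smul _ _).1 h
  obtain ⟨x, rfl⟩ := exists_eq_blockVec_of_Mmat_mulVec_eq_smul h0 hz
  have hxψ := xvec_psiOf_eq_self h0 h3' (quartic_of_Mmat_mulVec_blockVec h0 hz)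
  refine (Matrix.mem_spectrum_iff_exists_mulVec_eq_smul _ _).2
    ⟨psiOf G lam x, fun hψ => hz0 ?_, NBM_two_mulVec_psiOf h0 h3' hxψ⟩
  have hx : x = 0 := by
    rw [← hxψ, hψ]
    funext e
    simp [xvec]
  simp [hx, blockVec]

end PercNB
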